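/- Fix α > 1, ε_RDP,i > 0, and δ_i ∈ (0,1) for i = 1,...,k. If positive reals p_i, p'_i satisfy p_i ≤ (e^{ε_RDP,i} · p'_i)^{1−1/α} and e^{ε_RDP,i} · p'_i > δ_i^{α/(α−1)} for all i, then ∏p_i/(∏p_i + ∏p'_i) ≤ 1/(1 + ∏_{i=1}^k e^{−(ε_RDP,i + (α−1)^{-1} ln(1/δ_i))}). -/
import Mathlib


theorem rdp_posterior_belief_bound (k : ℕ) (α : ℝ) (hα : 1 < α)
    (εR δ p p' : Fin k → ℝ)
    (hε : ∀ i, 0 < εR i) (hδ0 : ∀ i, 0 < δ i) (hδ1 : ∀ i, δ i < 1)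
    (hp : ∀ i, 0 < p i) (hp' : ∀ i, 0 < p' i)
    (hpres : ∀ i, p i ≤ (Real.exp (εR i) * p' i) ^ (1 - 1 / α))
    (hlarge : ∀ i, δ i ^ (α / (α - 1)) < Real.exp (εR i) * p' i) :
    (∏ i, p i) / ((∏ i, p i) + ∏ i, p' i) ≤
      1 / (1 + ∏ i, Real.exp (-(εR i + (α - 1)⁻¹ * Real.log (1 / δ i)))) := by
  have hαpos : (0:ℝ) < α := lt_trans one_pos hα
  have hα1 : (0:ℝ) < α - 1 := sub_pos.mpr hα
  set ε : Fin k → ℝ := fun i => εR i + (α - 1)⁻¹ * Real.log (1 / δ i) with hεdef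
  have key : ∀ i, p i ≤ Real.exp (ε i) * p' i := by
    intro i
    set x := Real.exp (εR i) * p' i with hxdef
    have hx : 0 < x := mul_pos (Real.exp_pos _) (hp' i)
    have h1 : x ^ (1 - 1/α) = x * x ^ (-(1/α)) := by
      rw [show (1 - 1/α) = 1 + (-(1/α)) by ring, Real.rpow_add hx, Real.rpow_one]
    have h2 : x ^ (-(1/α)) ≤ Real.exp ((α-1)⁻¹ * Real.log (1/δ i)) := by
      have hδpos := hδ0 i
      have hδx : (0:ℝ) < δ i ^ (α/(α-1)) := Real.rpow_pos_of_pos hδpos _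
      have hmono : (δ i ^ (α/(α-1))) ^ (1/α) < x ^ (1/α) :=
        Real.rpow_lt_rpow (le_of_lt hδx) (hlarge i) (by positivity)
      have heq : (δ i ^ (α/(α-1))) ^ (1/α) = δ i ^ ((α-1)⁻¹) := by
        rw [← Real.rpow_mul (le_of_lt hδpos)]
        congr 1
        field_simp
      rw [heq] at hmono
      have hexp : Real.exp ((α-1)⁻¹ * Real.log (1/δ i)) = (δ i ^ ((α-1)⁻¹))⁻¹ := by
        rw [one_div, Real.log_inv, Real.rpow_def_of_pos hδpos]
        rw [← Real.exp_neg]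
        ring_nf
      rw [hexp, Real.rpow_neg (le_of_lt hx)]
      exact inv_anti₀ (Real.rpow_pos_of_pos hδpos _) (le_of_lt hmono)
    calc p i ≤ x ^ (1 - 1/α) := hpres i
      _ = x * x ^ (-(1/α)) := h1
      _ ≤ x * Real.exp ((α-1)⁻¹ * Real.log (1/δ i)) :=
          mul_le_mul_of_nonneg_left h2 (le_of_lt hx)
      _ = Real.exp (ε i) * p' i := by
          rw [hxdef, hεdef, Real.exp_add]; ring
  have hA : (0:ℝ) < ∏ i, p i := Finset.prod_pos (fun i _ => hp i)
  have hB : (0:ℝ) < ∏ i, p' i := Finset.prod_pos (fun i _ => hp' i)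
  have hE : (0:ℝ) < ∏ i, Real.exp (ε i) := Finset.prod_pos (fun i _ => Real.exp_pos _)
  have hC : (0:ℝ) < ∏ i, Real.exp (-(ε i)) := Finset.prod_pos (fun i _ => Real.exp_pos _)
  have hprod : (∏ i, p i) ≤ (∏ i, Real.exp (ε i)) * ∏ i, p' i := by
    rw [← Finset.prod_mul_distrib]
    exact Finset.prod_le_prod (fun i _ => (hp i).le) (fun i _ => key i)
  have hCE : (∏ i, Real.exp (-(ε i))) * (∏ i, Real.exp (ε i)) = 1 := by
    rw [← Finset.prod_mul_distrib]
    simp [← Real.exp_add]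
  rw [div_le_div_iff₀ (by linarith) (by linarith)]
  have hstep : (∏ i, p i) * (∏ i, Real.exp (-(ε i))) ≤ ∏ i, p' i := by
    have h := mul_le_mul_of_nonneg_right hprod (le_of_lt hC)
    calc (∏ i, p i) * (∏ i, Real.exp (-(ε i)))
        ≤ ((∏ i, Real.exp (ε i)) * ∏ i, p' i) * ∏ i, Real.exp (-(ε i)) := h
      _ = ((∏ i, Real.exp (-(ε i))) * (∏ i, Real.exp (ε i))) * ∏ i, p' i := by ring
      _ = ∏ i, p' i := by rw [hCE, one_mul]
  nlinarith [hstep, hA.le]
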